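/- arXiv:0901.4312 — 3 statements merged into one kernel-verified Lean document; each statement's English description precedes it below -/
import Mathlib

section
/- Let V : ℝ → ℝ be differentiable with V' = ξ·V^{k1}·(1-V)^{k3}, 0 < V < 1, and let b1 : ℝ → ℝ satisfy b1' = (1-k1)·ξ^2·V^{2k1-3}·(1-V)^{2k3-1}·V' (equivalently db1 = (1-k1)·ξ·V^{k1-2}·(1-V)^{k3-1} dV composed with V). Set b2 = b1 + ξ·V^{k1-1}·(1-V)^{k3} and b3 = b1 + ξ·V^{k1-1}·(1-V)^{k3-1}, and assume k1 + k2 + k3 = 2. Then (b1, b2, b3) solves the system b_i' = (1-k_i)·∏_{j≠i}(b_i - b_j) for i = 1,2,3. -/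
/-! With `p = V`, `q = 1 - V` and `s = ξ p^(k1-1) q^(k3-1)` one has `b3 - b1 = s`, `b2 - b1 = s q`,
`V' = s p q`, `b1' = (1 - k1) s² q` and `s' = s² ((k1 - 1) q - (k3 - 1) p)`. In these variables the
three equations are polynomial identities in `s, p, q`, the second one using `k2 = 2 - k1 - k3`. -/

open Real

theorem HasDerivAt.rpow_mul_one_sub_rpow {f : ℝ → ℝ} {f' x : ℝ} (a b : ℝ) (hf : HasDerivAt f f' x)
    (h0 : f x ≠ 0) (h1 : 1 - f x ≠ 0) :
    HasDerivAt (fun y => f y ^ a * (1 - f y) ^ b)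
      ((a * (1 - f x) - b * f x) * (f x ^ a * (1 - f x) ^ b) / (f x * (1 - f x)) * f') x := by
  refine ((hf.rpow_const (p := a) (Or.inl h0)).mul
    ((hf.const_sub 1).rpow_const (p := b) (Or.inl h1))).congr_deriv ?_
  rw [rpow_sub_one h0, rpow_sub_one h1]
  field_simp
  ring

theorem deriv_eq_of_reduced_system {k1 k2 k3 x : ℝ} (hk : k1 + k2 + k3 = 2)
    {V s b1 b2 b3 : ℝ → ℝ}
    (hV : HasDerivAt V (s x * V x * (1 - V x)) x)
    (hs : HasDerivAt s (s x ^ 2 * ((k1 - 1) * (1 - V x) - (k3 - 1) * V x)) x)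
    (hb1 : HasDerivAt b1 ((1 - k1) * s x ^ 2 * (1 - V x)) x)
    (hb2 : ∀ y, b2 y = b1 y + s y * (1 - V y)) (hb3 : ∀ y, b3 y = b1 y + s y) :
    deriv b1 x = (1 - k1) * (b1 x - b2 x) * (b1 x - b3 x) ∧
    deriv b2 x = (1 - k2) * (b2 x - b1 x) * (b2 x - b3 x) ∧
    deriv b3 x = (1 - k3) * (b3 x - b1 x) * (b3 x - b2 x) := by
  have hk2 : k2 = 2 - k1 - k3 := by linarith
  have hb2' := (hb1.add (hs.mul (hV.const_sub 1))).congr_of_eventuallyEq (.of_forall hb2)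
  have hb3' := (hb1.add hs).congr_of_eventuallyEq (.of_forall hb3)
  rw [hb1.deriv, hb2'.deriv, hb3'.deriv, hb2, hb3, hk2]
  refine ⟨?_, ?_, ?_⟩ <;> ring

theorem stmt2_general (k1 k2 k3 ξ : ℝ) (hk : k1 + k2 + k3 = 2)
    (V : ℝ → ℝ) (hV : Differentiable ℝ V)
    (hV01 : ∀ v, 0 < V v ∧ V v < 1)
    (hode : ∀ v, deriv V v = ξ * V v ^ k1 * (1 - V v) ^ k3)
    (b1 : ℝ → ℝ) (hb1 : Differentiable ℝ b1)
    (hb1' : ∀ v, deriv b1 v = (1 - k1) * ξ * V v ^ (k1 - 2) * (1 - V v) ^ (k3 - 1) * deriv V v)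
    (b2 b3 : ℝ → ℝ)
    (hb2 : ∀ v, b2 v = b1 v + ξ * V v ^ (k1 - 1) * (1 - V v) ^ k3)
    (hb3 : ∀ v, b3 v = b1 v + ξ * V v ^ (k1 - 1) * (1 - V v) ^ (k3 - 1)) :
    (∀ v, deriv b1 v = (1 - k1) * (b1 v - b2 v) * (b1 v - b3 v)) ∧
    (∀ v, deriv b2 v = (1 - k2) * (b2 v - b1 v) * (b2 v - b3 v)) ∧
    (∀ v, deriv b3 v = (1 - k3) * (b3 v - b1 v) * (b3 v - b2 v)) := by
  have hp v : V v ≠ 0 := (hV01 v).1.ne'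
  have hq v : 1 - V v ≠ 0 := sub_ne_zero.2 (hV01 v).2.ne'
  have hp_pow v : V v ^ k1 = V v ^ (k1 - 1) * V v := by
    rw [rpow_sub_one (hp v), div_mul_cancel₀ _ (hp v)]
  have hq_pow v : (1 - V v) ^ k3 = (1 - V v) ^ (k3 - 1) * (1 - V v) := by
    rw [rpow_sub_one (hq v), div_mul_cancel₀ _ (hq v)]
  set s := fun y => ξ * (V y ^ (k1 - 1) * (1 - V y) ^ (k3 - 1))
  have hV_deriv v : deriv V v = s v * V v * (1 - V v) := by rw [hode, hp_pow, hq_pow]; ring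
  have hs_deriv v : HasDerivAt s (s v ^ 2 * ((k1 - 1) * (1 - V v) - (k3 - 1) * V v)) v := by
    refine (((hV v).hasDerivAt.rpow_mul_one_sub_rpow (k1 - 1) (k3 - 1) (hp v) (hq v)).const_mul
      ξ).congr_deriv ?_
    rw [hV_deriv]; field_simp [hp v, hq v]; ring
  have hb1_deriv v : HasDerivAt b1 ((1 - k1) * s v ^ 2 * (1 - V v)) v := by
    refine (hb1 v).hasDerivAt.congr_deriv ?_
    rw [hb1', hV_deriv, show k1 - 2 = k1 - 1 - 1 by ring, rpow_sub_one (hp v)]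
    field_simp [hp v]; ring
  have hsys v := deriv_eq_of_reduced_system (b2 := b2) (b3 := b3) hk
    (hV_deriv v ▸ (hV v).hasDerivAt) (hs_deriv v) (hb1_deriv v)
    (fun y => by rw [hb2, hq_pow]; ring) (fun y => by rw [hb3]; ring)
  exact ⟨fun v => (hsys v).1, fun v => (hsys v).2.1, fun v => (hsys v).2.2⟩

theorem stmt2 (k1 k2 k3 ξ : ℝ) (hk : k1 + k2 + k3 = 2) (hξ : ξ ≠ 0)
    (V : ℝ → ℝ) (hV : Differentiable ℝ V)
    (hV01 : ∀ v, 0 < V v ∧ V v < 1)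
    (hode : ∀ v, deriv V v = ξ * V v ^ k1 * (1 - V v) ^ k3)
    (b1 : ℝ → ℝ) (hb1 : Differentiable ℝ b1)
    (hb1' : ∀ v, deriv b1 v = (1 - k1) * ξ * V v ^ (k1 - 2) * (1 - V v) ^ (k3 - 1) * deriv V v)
    (b2 b3 : ℝ → ℝ)
    (hb2 : ∀ v, b2 v = b1 v + ξ * V v ^ (k1 - 1) * (1 - V v) ^ k3)
    (hb3 : ∀ v, b3 v = b1 v + ξ * V v ^ (k1 - 1) * (1 - V v) ^ (k3 - 1)) :
    (∀ v, deriv b1 v = (1 - k1) * (b1 v - b2 v) * (b1 v - b3 v)) ∧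
    (∀ v, deriv b2 v = (1 - k2) * (b2 v - b1 v) * (b2 v - b3 v)) ∧
    (∀ v, deriv b3 v = (1 - k3) * (b3 v - b1 v) * (b3 v - b2 v)) :=
  stmt2_general k1 k2 k3 ξ hk V hV hV01 hode b1 hb1 hb1' b2 b3 hb2 hb3
end

section
/- Let s : ℝ → ℝ satisfy the Riccati equation s' = s² + B2·s + B3 where B2 = -(k1·b1 + k2·b2 + k3·b3) and B3 = (1-k1)·b2·b3 + (1-k2)·b1·b3 + (1-k3)·b1·b2 for constants b1, b2, b3, k1, k2, k3 with k1 + k2 + k3 = 2. If s(v) ≠ b1(v) for all v, then f = 1/(s - b1) satisfies the linear ODE f' = (k3·(b3 - b1) + k2·(b2 - b1))·f - 1, provided b1' = (1-k1)·(b1-b2)·(b1-b3). -/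
/-!
Since `b1` itself solves the Riccati equation (this is where `k1 + k2 + k3 = 2` enters), the
classical substitution `f = 1 / (s - b1)` for a Riccati equation with a known particular
solution linearizes it.
-/

theorem HasDerivAt.one_div_sub_of_riccati {𝕜 : Type*} [NontriviallyNormedField 𝕜]
    {s y : 𝕜 → 𝕜} {p q v : 𝕜}
    (hs : HasDerivAt s (s v ^ 2 + p * s v + q) v)
    (hy : HasDerivAt y (y v ^ 2 + p * y v + q) v) (hne : s v ≠ y v) :
    HasDerivAt (fun v => 1 / (s v - y v)) (-(2 * y v + p) * (1 / (s v - y v)) - 1) v := by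
  have hsub : s v - y v ≠ 0 := sub_ne_zero.mpr hne
  have hinv : HasDerivAt (fun v => 1 / (s v - y v))
      (-(s v ^ 2 + p * s v + q - (y v ^ 2 + p * y v + q)) / (s v - y v) ^ 2) v := by
    simpa only [one_div, Pi.inv_def, Pi.sub_apply] using (hs.sub hy).inv hsub
  convert hinv using 1
  field_simp
  ring

theorem riccati_eq_of_sum_eq_two {R : Type*} [CommRing R] {k1 k2 k3 : R} (hk : k1 + k2 + k3 = 2)
    (b1 b2 b3 : R) :
    (1 - k1) * (b1 - b2) * (b1 - b3) = b1 ^ 2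
      + (-(k1 * b1 + k2 * b2 + k3 * b3)) * b1
      + ((1 - k1) * b2 * b3 + (1 - k2) * b1 * b3 + (1 - k3) * b1 * b2) := by
  linear_combination b1 * (b2 + b3) * hk

theorem stmt3_general (k1 k2 k3 : ℝ) (hk : k1 + k2 + k3 = 2)
    (b1 b2 b3 : ℝ → ℝ)
    (hb1 : Differentiable ℝ b1)
    (hb1' : ∀ v, deriv b1 v = (1 - k1) * (b1 v - b2 v) * (b1 v - b3 v))
    (s : ℝ → ℝ) (hs : Differentiable ℝ s)
    (hric : ∀ v, deriv s v = s v ^ 2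
      + (-(k1 * b1 v + k2 * b2 v + k3 * b3 v)) * s v
      + ((1 - k1) * b2 v * b3 v + (1 - k2) * b1 v * b3 v + (1 - k3) * b1 v * b2 v))
    (hne : ∀ v, s v ≠ b1 v) :
    ∀ v, deriv (fun v => 1 / (s v - b1 v)) v =
      (k3 * (b3 v - b1 v) + k2 * (b2 v - b1 v)) * (1 / (s v - b1 v)) - 1 := by
  intro v
  have hs_ric := hric v ▸ (hs v).hasDerivAt
  have hb1_ric := (hb1' v).trans (riccati_eq_of_sum_eq_two hk _ _ _) ▸ (hb1 v).hasDerivAt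
  rw [(hs_ric.one_div_sub_of_riccati hb1_ric (hne v)).deriv]
  linear_combination b1 v * (1 / (s v - b1 v)) * hk

theorem stmt3 (k1 k2 k3 : ℝ) (hk : k1 + k2 + k3 = 2)
    (b1 b2 b3 : ℝ → ℝ)
    (hb1 : Differentiable ℝ b1) (hb2 : Differentiable ℝ b2) (hb3 : Differentiable ℝ b3)
    (hb1' : ∀ v, deriv b1 v = (1 - k1) * (b1 v - b2 v) * (b1 v - b3 v))
    (s : ℝ → ℝ) (hs : Differentiable ℝ s)
    (hric : ∀ v, deriv s v = s v ^ 2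
      + (-(k1 * b1 v + k2 * b2 v + k3 * b3 v)) * s v
      + ((1 - k1) * b2 v * b3 v + (1 - k2) * b1 v * b3 v + (1 - k3) * b1 v * b2 v))
    (hne : ∀ v, s v ≠ b1 v) :
    ∀ v, deriv (fun v => 1 / (s v - b1 v)) v =
      (k3 * (b3 v - b1 v) + k2 * (b2 v - b1 v)) * (1 / (s v - b1 v)) - 1 :=
  stmt3_general k1 k2 k3 hk b1 b2 b3 hb1 hb1' s hs hric hne
end

section
/- Let g : ℝ → ℝ be twice differentiable with g' never zero, and suppose g''/(g')² = k1/(g - b1) + k2/(g - b2) + k3/(g - b3) pointwise, with g(v) never equal to b1, b2, or b3 (b1, b2, b3, k1, k2, k3 constants). Then there exists a constant b such that g' = b·(g - b1)^{k1}·(g - b2)^{k2}·(g - b3)^{k3}, provided g - b1, g - b2, g - b3 are everywhere positive. -/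
/-!
The ODE `g'' = g'² · ∑ kᵢ / (g - bᵢ)` says that `F = g' · ∏ (g - bᵢ) ^ (-kᵢ)` is a first
integral: the logarithmic derivative of `∏ (y - bᵢ) ^ (-kᵢ)` is `-∑ kᵢ / (y - bᵢ)`, so
`F' = ∏ (g - bᵢ) ^ (-kᵢ) · (g'' - g'² · ∑ kᵢ / (g - bᵢ)) = 0`. Hence `F` is a constant `b`.
-/

open Finset

section
variable {ι : Type*} (s : Finset ι) (b k : ι → ℝ)

theorem hasDerivAt_prod_sub_rpow_neg {y : ℝ} (hy : ∀ i ∈ s, b i < y) :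
    HasDerivAt (fun y => ∏ i ∈ s, (y - b i) ^ (-k i))
      (-(∑ i ∈ s, k i / (y - b i)) * ∏ i ∈ s, (y - b i) ^ (-k i)) y := by
  classical
  induction s using Finset.induction_on with
  | empty => simpa using hasDerivAt_const y (1 : ℝ)
  | insert a s ha ih =>
    have hya : y - b a ≠ 0 := (sub_pos.2 (hy a (mem_insert_self a s))).ne'
    have hfactor : HasDerivAt (fun y => (y - b a) ^ (-k a))
        (1 * -k a * (y - b a) ^ (-k a - 1)) y :=
      ((hasDerivAt_id y).sub_const (b a)).rpow_const (Or.inl hya)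
    simp only [prod_insert ha, sum_insert ha]
    refine (hfactor.mul (ih fun i hi => hy i (mem_insert_of_mem hi))).congr_deriv ?_
    rw [Real.rpow_sub_one hya]
    field_simp
    ring

theorem exists_eq_mul_prod_rpow_of_hasDerivAt {g g' : ℝ → ℝ}
    (hg : ∀ v, HasDerivAt g (g' v) v)
    (hg' : ∀ v, HasDerivAt g' (g' v ^ 2 * ∑ i ∈ s, k i / (g v - b i)) v)
    (hpos : ∀ v, ∀ i ∈ s, b i < g v) :
    ∃ c, ∀ v, g' v = c * ∏ i ∈ s, (g v - b i) ^ k i := by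
  set F := fun v => g' v * ∏ i ∈ s, (g v - b i) ^ (-k i)
  have hF : ∀ v, HasDerivAt F 0 v := fun v => by
    refine ((hg' v).mul
      ((hasDerivAt_prod_sub_rpow_neg s b k (hpos v)).comp v (hg v))).congr_deriv ?_
    simp only [Function.comp_apply]
    ring
  refine ⟨F 0, fun v => ?_⟩
  have hprod : (∏ i ∈ s, (g v - b i) ^ (-k i)) * ∏ i ∈ s, (g v - b i) ^ k i = 1 := by
    rw [← prod_mul_distrib]
    refine prod_eq_one fun i hi => ?_
    rw [← Real.rpow_add (sub_pos.2 (hpos v i hi)), neg_add_cancel, Real.rpow_zero]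
  rw [← is_const_of_deriv_eq_zero (fun v => (hF v).differentiableAt) (fun v => (hF v).deriv) v 0,
    mul_assoc, hprod, mul_one]

end

theorem stmt6 (g : ℝ → ℝ) (b1 b2 b3 k1 k2 k3 : ℝ)
    (hg : ContDiff ℝ 2 g)
    (hpos1 : ∀ v, 0 < g v - b1) (hpos2 : ∀ v, 0 < g v - b2) (hpos3 : ∀ v, 0 < g v - b3)
    (hg' : ∀ v, deriv g v ≠ 0)
    (h : ∀ v, deriv (deriv g) v / (deriv g v) ^ 2 =
      k1 / (g v - b1) + k2 / (g v - b2) + k3 / (g v - b3)) :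
    ∃ b : ℝ, ∀ v, deriv g v =
      b * (g v - b1) ^ k1 * (g v - b2) ^ k2 * (g v - b3) ^ k3 := by
  have hode : ∀ v, HasDerivAt (deriv g)
      (deriv g v ^ 2 * ∑ i, ![k1, k2, k3] i / (g v - ![b1, b2, b3] i)) v := fun v => by
    simp only [Fin.sum_univ_three, Fin.isValue, Matrix.cons_val_zero, Matrix.cons_val_one,
      Matrix.cons_val]
    rw [← h v, mul_div_cancel₀ _ (pow_ne_zero 2 (hg' v))]
    exact (hg.differentiable_deriv_two v).hasDerivAt
  have hpos : ∀ v, ∀ i ∈ univ, ![b1, b2, b3] i < g v := fun v i _ => by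
    fin_cases i
    exacts [sub_pos.1 (hpos1 v), sub_pos.1 (hpos2 v), sub_pos.1 (hpos3 v)]
  obtain ⟨c, hc⟩ := exists_eq_mul_prod_rpow_of_hasDerivAt univ ![b1, b2, b3] ![k1, k2, k3]
    (fun v => (hg.differentiable two_ne_zero v).hasDerivAt) hode hpos
  refine ⟨c, fun v => ?_⟩
  rw [hc v]
  simp only [Fin.prod_univ_three, Fin.isValue, Matrix.cons_val_zero, Matrix.cons_val_one,
    Matrix.cons_val]
  ring
end
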